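/- arXiv:1403.7894 — 7 statements merged into one kernel-verified Lean document; each statement's English description precedes it below -/
import Mathlib

section
/- Every nonzero element of the quaternion algebra ℍ[ℚ, −p, −q] is invertible; that is, ℍ[ℚ, −p, −q] is a division ring. -/
open Quaternion

/-! For `c₁, c₂ < 0` the reduced norm `a * star a = a₀² - c₁a₁² - c₂a₂² + c₁c₂a₃²` of `ℍ[R,c₁,c₂]`
is a positive definite form over an ordered field, so a nonzero `a` has a unit norm, and `a`
commutes with `star a`, hence is itself a unit. -/

namespace QuaternionAlgebra

theorem isUnit_of_isUnit_re_mul_star {R : Type*} [CommRing R] {c₁ c₂ c₃ : R}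
    {a : ℍ[R,c₁,c₂,c₃]} (h : IsUnit (a * star a).re) : IsUnit a := by
  have hnorm : IsUnit (a * star a) := by
    rw [mul_star_eq_coe, ← coe_algebraMap]
    exact h.map _
  exact ((star_comm_self (x := a)).symm.isUnit_mul_iff.mp hnorm).1

theorem re_mul_star_eq {R : Type*} [CommRing R] {c₁ c₂ : R} (a : ℍ[R,c₁,c₂]) :
    (a * star a).re = a.re ^ 2 - c₁ * a.imI ^ 2 - c₂ * a.imJ ^ 2 + c₁ * c₂ * a.imK ^ 2 := by
  simp only [re_mul, re_star, imI_star, imJ_star, imK_star]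
  ring

variable {R : Type*} [Field R] [LinearOrder R] [IsStrictOrderedRing R] {c₁ c₂ : R}

theorem re_mul_star_pos (hc₁ : c₁ < 0) (hc₂ : c₂ < 0) {a : ℍ[R,c₁,c₂]} (ha : a ≠ 0) :
    0 < (a * star a).re := by
  have hcomp : a.re ≠ 0 ∨ a.imI ≠ 0 ∨ a.imJ ≠ 0 ∨ a.imK ≠ 0 := by
    contrapose! ha
    ext <;> simp [ha]
  have h₁ : 0 ≤ -c₁ * a.imI ^ 2 := by have := neg_pos.2 hc₁; positivity
  have h₂ : 0 ≤ -c₂ * a.imJ ^ 2 := by have := neg_pos.2 hc₂; positivity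
  have h₃ : 0 ≤ c₁ * c₂ * a.imK ^ 2 := by have := mul_pos_of_neg_of_neg hc₁ hc₂; positivity
  rw [re_mul_star_eq]
  rcases hcomp with h | h | h | h
  · nlinarith [sq_pos_of_ne_zero h]
  · nlinarith [mul_pos (neg_pos.2 hc₁) (sq_pos_of_ne_zero h)]
  · nlinarith [mul_pos (neg_pos.2 hc₂) (sq_pos_of_ne_zero h)]
  · nlinarith [mul_pos (mul_pos_of_neg_of_neg hc₁ hc₂) (sq_pos_of_ne_zero h)]

theorem isUnit_of_ne_zero (hc₁ : c₁ < 0) (hc₂ : c₂ < 0) {a : ℍ[R,c₁,c₂]} (ha : a ≠ 0) :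
    IsUnit a :=
  isUnit_of_isUnit_re_mul_star (re_mul_star_pos hc₁ hc₂ ha).ne'.isUnit

end QuaternionAlgebra

theorem quaternionAlgebra_isUnit_of_ne_zero_general (p q : ℕ) [Fact p.Prime] (hq : q.Prime)
    (x : ℍ[ℚ, -(p : ℚ), -(q : ℚ)]) (hx : x ≠ 0) :
    IsUnit x := by
  have hp₀ : (0 : ℚ) < p := by exact_mod_cast (Fact.out : p.Prime).pos
  have hq₀ : (0 : ℚ) < q := by exact_mod_cast hq.pos
  exact QuaternionAlgebra.isUnit_of_ne_zero (neg_neg_of_pos hp₀) (neg_neg_of_pos hq₀) hx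

/-- Let `p` and `q` be odd primes with `q ≡ 3 (mod 8)` and Legendre symbol
`(-q/p) = -1`. Then every nonzero element of the quaternion algebra `ℍ[ℚ, -p, -q]`
is invertible, i.e. `ℍ[ℚ, -p, -q]` is a division ring. -/
theorem quaternionAlgebra_isUnit_of_ne_zero (p q : ℕ) [Fact p.Prime] (hq : q.Prime)
    (hpodd : Odd p) (hqodd : Odd q) (hq8 : q % 8 = 3)
    (hleg : legendreSym p (-(q : ℤ)) = -1)
    (x : ℍ[ℚ, -(p : ℚ), -(q : ℚ)]) (hx : x ≠ 0) :
    IsUnit x :=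
  quaternionAlgebra_isUnit_of_ne_zero_general p q hq x hx
end

section
/- The ℤ-submodule O of B spanned by 1, (1+j)/2, (i+k)/2, (a·j+k)/q contains 1 and is closed under multiplication; that is, there is a subring of B whose underlying set is O (so O is a ℤ-order in B). -/
/-!
Write `e₂ = (1 + j)/2`, `e₃ = (i + k)/2`, `e₄ = (a j + k)/q`. Each product of two of `1, e₂, e₃, e₄`
is a combination of them whose coefficients are polynomials in `a`, `n = (q + 1)/4` and
`t = (a² + p)/q`; these are integers because `q ≡ 3 (mod 4)` and `a² ≡ -p (mod q)`. Hence the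
`ℤ`-span of the four elements is closed under multiplication.
-/

open Quaternion Submodule

theorem Submodule.mul_mem_span_of_mul_mem {R A : Type*} [CommSemiring R] [Semiring A]
    [Algebra R A] {s : Set A} (hs : ∀ x ∈ s, ∀ y ∈ s, x * y ∈ span R s) {x y : A}
    (hx : x ∈ span R s) (hy : y ∈ span R s) : x * y ∈ span R s := by
  refine mul_le.1 ?_ x hx y hy
  rw [span_mul_span, span_le]
  rintro _ ⟨x, hx, y, hy, rfl⟩
  exact hs x hx y hy

namespace QuaternionAlgebra

variable {P Q : ℚ} {a n t : ℤ}

def e₂ : ℍ[ℚ, -P, -Q] := (2 : ℚ)⁻¹ • (1 + ⟨0, 0, 1, 0⟩)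

def e₃ : ℍ[ℚ, -P, -Q] := (2 : ℚ)⁻¹ • (⟨0, 1, 0, 0⟩ + ⟨0, 0, 0, 1⟩)

def e₄ (a : ℤ) : ℍ[ℚ, -P, -Q] := Q⁻¹ • ((a : ℚ) • ⟨0, 0, 1, 0⟩ + ⟨0, 0, 0, 1⟩)

theorem e₂_mul_e₂ (hn : (n : ℚ) = (Q + 1) / 4) : (e₂ * e₂ : ℍ[ℚ, -P, -Q]) = e₂ - n • 1 := by
  ext <;> simp [e₂, ← Int.cast_smul_eq_zsmul ℚ, hn] <;> ring

theorem e₂_mul_e₃ (hQ : Q ≠ 0) (hn : (n : ℚ) = (Q + 1) / 4) : (e₂ * e₃ : ℍ[ℚ, -P, -Q]) =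
    (2 * a * n) • e₂ + (2 * n) • e₃ - ((4 * n - 1) * n) • e₄ a - (a * n) • 1 := by
  ext <;> simp [e₂, e₃, e₄, ← Int.cast_smul_eq_zsmul ℚ, hn] <;> field_simp <;> ring

theorem e₃_mul_e₂ (hQ : Q ≠ 0) (hn : (n : ℚ) = (Q + 1) / 4) : (e₃ * e₂ : ℍ[ℚ, -P, -Q]) =
    (1 - 2 * n) • e₃ + ((4 * n - 1) * n) • e₄ a - (2 * a * n) • e₂ + (a * n) • 1 := by
  ext <;> simp [e₂, e₃, e₄, ← Int.cast_smul_eq_zsmul ℚ, hn] <;> field_simp <;> ring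

theorem e₂_mul_e₄ (hQ : Q ≠ 0) (hn : (n : ℚ) = (Q + 1) / 4) :
    (e₂ * e₄ a : ℍ[ℚ, -P, -Q]) = a • e₂ + e₃ + (1 - 2 * n) • e₄ a - a • 1 := by
  ext <;> simp [e₂, e₃, e₄, ← Int.cast_smul_eq_zsmul ℚ, hn] <;> field_simp <;> ring

theorem e₄_mul_e₂ (hQ : Q ≠ 0) (hn : (n : ℚ) = (Q + 1) / 4) :
    (e₄ a * e₂ : ℍ[ℚ, -P, -Q]) = (2 * n) • e₄ a - a • e₂ - e₃ := by
  ext <;> simp [e₂, e₃, e₄, ← Int.cast_smul_eq_zsmul ℚ, hn] <;> field_simp <;> ring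

theorem e₃_mul_e₃ (hQ : Q ≠ 0) (hn : (n : ℚ) = (Q + 1) / 4) (ht : (t : ℚ) = (a ^ 2 + P) / Q) :
    (e₃ * e₃ : ℍ[ℚ, -P, -Q]) = ((a ^ 2 - (4 * n - 1) * t) * n) • 1 := by
  ext <;> simp [e₃, ← Int.cast_smul_eq_zsmul ℚ, hn, ht]
  field_simp
  ring

theorem e₃_mul_e₄ (hQ : Q ≠ 0) (hn : (n : ℚ) = (Q + 1) / 4) (ht : (t : ℚ) = (a ^ 2 + P) / Q) :
    (e₃ * e₄ a : ℍ[ℚ, -P, -Q]) =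
      (a ^ 2 + t - 2 * n * t) • 1 - (t + a ^ 2) • e₂ - a • e₃ + (2 * a * n) • e₄ a := by
  ext <;> simp [e₂, e₃, e₄, ← Int.cast_smul_eq_zsmul ℚ, hn, ht] <;> field_simp <;> ring

theorem e₄_mul_e₃ (hQ : Q ≠ 0) (hn : (n : ℚ) = (Q + 1) / 4) (ht : (t : ℚ) = (a ^ 2 + P) / Q) :
    (e₄ a * e₃ : ℍ[ℚ, -P, -Q]) =
      (t + a ^ 2) • e₂ + a • e₃ - (2 * a * n) • e₄ a - (2 * n * t) • 1 := by
  ext <;> simp [e₂, e₃, e₄, ← Int.cast_smul_eq_zsmul ℚ, hn, ht] <;> field_simp <;> ring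

theorem e₄_mul_e₄ (hQ : Q ≠ 0) (ht : (t : ℚ) = (a ^ 2 + P) / Q) :
    (e₄ a * e₄ a : ℍ[ℚ, -P, -Q]) = -(t • 1) := by
  ext <;> simp [e₄, ← Int.cast_smul_eq_zsmul ℚ, ht] <;> field_simp <;> ring

def orderSpan (P Q : ℚ) (a : ℤ) : Submodule ℤ ℍ[ℚ, -P, -Q] := span ℤ {1, e₂, e₃, e₄ a}

theorem one_mem_orderSpan : 1 ∈ orderSpan P Q a := subset_span (by simp)

theorem mul_mem_orderSpan (hQ : Q ≠ 0) (hn : (n : ℚ) = (Q + 1) / 4)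
    (ht : (t : ℚ) = (a ^ 2 + P) / Q) {x y : ℍ[ℚ, -P, -Q]} (hx : x ∈ orderSpan P Q a)
    (hy : y ∈ orderSpan P Q a) : x * y ∈ orderSpan P Q a := by
  have one_mem : 1 ∈ orderSpan P Q a := one_mem_orderSpan
  have e₂_mem : e₂ ∈ orderSpan P Q a := subset_span (by simp)
  have e₃_mem : e₃ ∈ orderSpan P Q a := subset_span (by simp)
  have e₄_mem : e₄ a ∈ orderSpan P Q a := subset_span (by simp)
  refine mul_mem_span_of_mul_mem (fun x hx y hy ↦ ?_) hx hy
  change x * y ∈ orderSpan P Q a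
  rcases hx with rfl | rfl | rfl | rfl <;> rcases hy with rfl | rfl | rfl | rfl <;>
    simp only [one_mul, mul_one, e₂_mul_e₂ hn, e₂_mul_e₃ (a := a) hQ hn,
      e₃_mul_e₂ (a := a) hQ hn, e₂_mul_e₄ hQ hn, e₄_mul_e₂ hQ hn, e₃_mul_e₃ hQ hn ht,
      e₃_mul_e₄ hQ hn ht, e₄_mul_e₃ hQ hn ht, e₄_mul_e₄ hQ ht] <;>
    repeat first | assumption | apply add_mem | apply sub_mem | apply neg_mem | apply smul_mem

end QuaternionAlgebra

theorem quaternionAlgebra_order_general (p q : ℕ) (hq8 : q % 8 = 3)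
    (a : ℤ) (ha : a ^ 2 ≡ -(p : ℤ) [ZMOD (q : ℤ)]) :
    let i : ℍ[ℚ, -(p : ℚ), -(q : ℚ)] := ⟨0, 1, 0, 0⟩
    let j : ℍ[ℚ, -(p : ℚ), -(q : ℚ)] := ⟨0, 0, 1, 0⟩
    let k : ℍ[ℚ, -(p : ℚ), -(q : ℚ)] := ⟨0, 0, 0, 1⟩
    let O : Submodule ℤ ℍ[ℚ, -(p : ℚ), -(q : ℚ)] :=
      Submodule.span ℤ {1, ((2 : ℚ)⁻¹) • (1 + j), ((2 : ℚ)⁻¹) • (i + k),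
        ((q : ℚ)⁻¹) • ((a : ℚ) • j + k)}
    (1 : ℍ[ℚ, -(p : ℚ), -(q : ℚ)]) ∈ O ∧
      (∀ x ∈ O, ∀ y ∈ O, x * y ∈ O) ∧
      ∃ S : Subring ℍ[ℚ, -(p : ℚ), -(q : ℚ)], (S : Set ℍ[ℚ, -(p : ℚ), -(q : ℚ)]) = (O : Set ℍ[ℚ, -(p : ℚ), -(q : ℚ)]) := by
  intro i j k O
  have hq : (q : ℚ) ≠ 0 := by exact_mod_cast (by omega : q ≠ 0)
  obtain ⟨n, hn⟩ : ∃ n : ℤ, (n : ℚ) = (q + 1) / 4 := by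
    obtain ⟨n, hn⟩ : (4 : ℤ) ∣ q + 1 := by omega
    exact ⟨n, by rw [eq_div_iff four_ne_zero]; exact_mod_cast (by linarith : n * 4 = (q : ℤ) + 1)⟩
  obtain ⟨t, ht⟩ : ∃ t : ℤ, (t : ℚ) = (a ^ 2 + p) / q := by
    obtain ⟨t, ht⟩ := Int.ModEq.dvd ha.symm
    exact ⟨t, by rw [eq_div_iff hq]; exact_mod_cast (by linarith : t * q = a ^ 2 + (p : ℤ))⟩
  have one_mem : (1 : ℍ[ℚ, -(p : ℚ), -(q : ℚ)]) ∈ O :=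
    QuaternionAlgebra.one_mem_orderSpan
  have mul_mem : ∀ x ∈ O, ∀ y ∈ O, x * y ∈ O := fun _ hx _ hy ↦
    QuaternionAlgebra.mul_mem_orderSpan hq hn ht hx hy
  exact ⟨one_mem, mul_mem,
    (O.toSubalgebra one_mem fun x y hx hy ↦ mul_mem x hx y hy).toSubring, rfl⟩

/-- With `p`, `q` odd primes, `q ≡ 3 (mod 8)`, `(-q/p) = -1`, and `a` an integer
with `a² ≡ -p (mod q)`, the `ℤ`-submodule `O` of `B = ℍ[ℚ, -p, -q]` spanned by
`1, (1+j)/2, (i+k)/2, (a·j+k)/q` contains `1` and is closed under multiplication; that is,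
there is a subring of `B` whose underlying set is `O` (so `O` is a `ℤ`-order in `B`). -/
theorem quaternionAlgebra_order (p q : ℕ) [Fact p.Prime] (hq : q.Prime)
    (hpodd : Odd p) (hqodd : Odd q) (hq8 : q % 8 = 3)
    (hleg : legendreSym p (-(q : ℤ)) = -1)
    (a : ℤ) (ha : a ^ 2 ≡ -(p : ℤ) [ZMOD (q : ℤ)]) :
    let i : ℍ[ℚ, -(p : ℚ), -(q : ℚ)] := ⟨0, 1, 0, 0⟩
    let j : ℍ[ℚ, -(p : ℚ), -(q : ℚ)] := ⟨0, 0, 1, 0⟩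
    let k : ℍ[ℚ, -(p : ℚ), -(q : ℚ)] := ⟨0, 0, 0, 1⟩
    let O : Submodule ℤ ℍ[ℚ, -(p : ℚ), -(q : ℚ)] :=
      Submodule.span ℤ {1, ((2 : ℚ)⁻¹) • (1 + j), ((2 : ℚ)⁻¹) • (i + k),
        ((q : ℚ)⁻¹) • ((a : ℚ) • j + k)}
    (1 : ℍ[ℚ, -(p : ℚ), -(q : ℚ)]) ∈ O ∧
      (∀ x ∈ O, ∀ y ∈ O, x * y ∈ O) ∧
      ∃ S : Subring ℍ[ℚ, -(p : ℚ), -(q : ℚ)], (S : Set ℍ[ℚ, -(p : ℚ), -(q : ℚ)]) = (O : Set ℍ[ℚ, -(p : ℚ), -(q : ℚ)]) :=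
  quaternionAlgebra_order_general p q hq8 a ha
end

section
/- The ℤ-submodule O of B spanned by 1, (1+j)/2, (i+k)/2, (a·j+k)/q is stable under quaternion conjugation x ↦ x̄ (the star involution of B), and for every x ∈ O both the reduced trace x + x̄ and the reduced norm x·x̄ lie in ℤ·1 ⊆ B. -/
/-!
Every element of `O` is `x = n₀ + n₁ (1 + j)/2 + n₂ (i + k)/2 + n₃ (a j + k)/q` with `nᵢ ∈ ℤ`.
Its reduced trace is `2 n₀ + n₁`, so `star x = (2 n₀ + n₁) - x ∈ O`, and its reduced norm is
`n₀² + n₀ n₁ + (q + 1)/4 · (n₁² + p n₂²) + a n₁ n₃ + p n₂ n₃ + (a² + p)/q · n₃²`,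
an integer because `q ≡ 3 (mod 4)` and `q ∣ a² + p`.
-/

open Quaternion

theorem Submodule.mem_span_quadruple {R M : Type*} [Semiring R] [AddCommMonoid M] [Module R M]
    {v x y z w : M} :
    v ∈ span R ({x, y, z, w} : Set M) ↔ ∃ a b c d : R, a • x + b • y + c • z + d • w = v := by
  rw [mem_span_insert]
  simp_rw [mem_span_triple]
  refine exists_congr fun a ↦ ⟨?_, ?_⟩
  · rintro ⟨u, ⟨b, c, d, rfl⟩, rfl⟩
    exact ⟨b, c, d, by simp only [add_assoc]⟩
  · rintro ⟨b, c, d, rfl⟩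
    exact ⟨b • y + c • z + d • w, ⟨b, c, d, rfl⟩, by simp only [add_assoc]⟩

theorem star_mem_of_add_star_eq_intCast {A : Type*} [Ring A] [Star A] {L : Submodule ℤ A}
    (hL : 1 ∈ L) {x : A} (hx : x ∈ L) {n : ℤ} (h : x + star x = n) : star x ∈ L := by
  rw [eq_sub_of_add_eq' h, ← zsmul_one]
  exact sub_mem (L.smul_mem n hL) hx

theorem QuaternionAlgebra.mul_star_eq_coe_norm {R : Type*} [CommRing R] {c₁ c₃ : R}
    (x : ℍ[R, c₁, c₃]) :
    x * star x = ↑(x.re ^ 2 - c₁ * x.imI ^ 2 - c₃ * x.imJ ^ 2 + c₁ * c₃ * x.imK ^ 2) := by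
  rw [mul_star_eq_coe]
  congr 1
  simp only [re_mul, re_star, imI_star, imJ_star, imK_star, zero_mul, add_zero, mul_neg,
    neg_zero, sub_neg_eq_add]
  ring

section LatticePoint

variable (p q a : ℤ)

local notation "𝔹" => ℍ[ℚ, -(p : ℚ), -(q : ℚ)]

/-- The element `n₀ + n₁ (1 + j)/2 + n₂ (i + k)/2 + n₃ (a j + k)/q` of `ℍ[ℚ, -p, -q]`. -/
def latticePoint (n₀ n₁ n₂ n₃ : ℤ) : 𝔹 :=
  ⟨n₀ + n₁ / 2, n₂ / 2, n₁ / 2 + n₃ * a / q, n₂ / 2 + n₃ / q⟩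

theorem zsmul_add_eq_latticePoint (n₀ n₁ n₂ n₃ : ℤ) :
    n₀ • (1 : 𝔹) + n₁ • ((2 : ℚ)⁻¹ • (1 + ⟨0, 0, 1, 0⟩)) +
        n₂ • ((2 : ℚ)⁻¹ • (⟨0, 1, 0, 0⟩ + ⟨0, 0, 0, 1⟩)) +
        n₃ • ((q : ℚ)⁻¹ • ((a : ℚ) • ⟨0, 0, 1, 0⟩ + ⟨0, 0, 0, 1⟩)) =
      latticePoint p q a n₀ n₁ n₂ n₃ := by
  ext <;> simp [latticePoint, zsmul_eq_mul] <;> ring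

theorem latticePoint_add_star (n₀ n₁ n₂ n₃ : ℤ) :
    latticePoint p q a n₀ n₁ n₂ n₃ + star (latticePoint p q a n₀ n₁ n₂ n₃) =
      ((2 * n₀ + n₁ : ℤ) : 𝔹) := by
  rw [QuaternionAlgebra.self_add_star', ← QuaternionAlgebra.coe_intCast]
  congr 1
  push_cast [latticePoint]
  ring

variable {p q a}

theorem latticePoint_mul_star {r t : ℤ} (hr : q + 1 = 4 * r) (ht : a ^ 2 + p = q * t)
    (n₀ n₁ n₂ n₃ : ℤ) :
    latticePoint p q a n₀ n₁ n₂ n₃ * star (latticePoint p q a n₀ n₁ n₂ n₃) =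
      ((n₀ ^ 2 + n₀ * n₁ + r * (n₁ ^ 2 + p * n₂ ^ 2) + a * n₁ * n₃ + p * n₂ * n₃ + t * n₃ ^ 2 :
        ℤ) : 𝔹) := by
  have hq : (q : ℚ) ≠ 0 := by norm_cast; omega
  have hr' : (q : ℚ) + 1 = 4 * r := by exact_mod_cast hr
  have ht' : (a : ℚ) ^ 2 + p = q * t := by exact_mod_cast ht
  rw [QuaternionAlgebra.mul_star_eq_coe_norm, ← QuaternionAlgebra.coe_intCast]
  congr 1
  simp only [latticePoint]
  push_cast
  field_simp
  linear_combination (4 * (n₃ : ℚ) ^ 2) * ht' + ((q : ℚ) * (n₁ ^ 2 + p * n₂ ^ 2)) * hr'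

end LatticePoint

theorem quaternionAlgebra_order_star_stable_general (p q : ℕ)
    (hq8 : q % 8 = 3)
    (a : ℤ) (ha : a ^ 2 ≡ -(p : ℤ) [ZMOD (q : ℤ)]) :
    let i : ℍ[ℚ, -(p : ℚ), -(q : ℚ)] := ⟨0, 1, 0, 0⟩
    let j : ℍ[ℚ, -(p : ℚ), -(q : ℚ)] := ⟨0, 0, 1, 0⟩
    let k : ℍ[ℚ, -(p : ℚ), -(q : ℚ)] := ⟨0, 0, 0, 1⟩
    let O : Submodule ℤ ℍ[ℚ, -(p : ℚ), -(q : ℚ)] :=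
      Submodule.span ℤ {1, ((2 : ℚ)⁻¹) • (1 + j), ((2 : ℚ)⁻¹) • (i + k),
        ((q : ℚ)⁻¹) • ((a : ℚ) • j + k)}
    ∀ x ∈ O, star x ∈ O ∧ (∃ n : ℤ, x + star x = (n : ℍ[ℚ, -(p : ℚ), -(q : ℚ)])) ∧
      (∃ n : ℤ, x * star x = (n : ℍ[ℚ, -(p : ℚ), -(q : ℚ)])) := by
  rw [← Int.cast_natCast (R := ℚ) p, ← Int.cast_natCast (R := ℚ) q]
  intro i j k O x hx
  obtain ⟨t, ht⟩ : (q : ℤ) ∣ a ^ 2 + p := by simpa using ha.symm.dvd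
  obtain ⟨n₀, n₁, n₂, n₃, rfl⟩ := Submodule.mem_span_quadruple.mp hx
  rw [zsmul_add_eq_latticePoint] at hx ⊢
  have htrace := latticePoint_add_star p q a n₀ n₁ n₂ n₃
  exact ⟨star_mem_of_add_star_eq_intCast (Submodule.subset_span (by simp)) hx htrace,
    ⟨_, htrace⟩, ⟨_, latticePoint_mul_star (r := q / 4 + 1) (by omega) ht n₀ n₁ n₂ n₃⟩⟩

/-- With `p`, `q` odd primes, `q ≡ 3 (mod 8)`, `(-q/p) = -1`, and `a` an integer
with `a² ≡ -p (mod q)`, the `ℤ`-submodule `O` of `B = ℍ[ℚ, -p, -q]` spanned by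
`1, (1+j)/2, (i+k)/2, (a·j+k)/q` is stable under quaternion conjugation `x ↦ star x`
(the star involution of `B`), and for every `x ∈ O` both the reduced trace `x + star x`
and the reduced norm `x * star x` lie in `ℤ·1 ⊆ B`. -/
theorem quaternionAlgebra_order_star_stable (p q : ℕ) [Fact p.Prime] (hq : q.Prime)
    (hpodd : Odd p) (hqodd : Odd q) (hq8 : q % 8 = 3)
    (hleg : legendreSym p (-(q : ℤ)) = -1)
    (a : ℤ) (ha : a ^ 2 ≡ -(p : ℤ) [ZMOD (q : ℤ)]) :
    let i : ℍ[ℚ, -(p : ℚ), -(q : ℚ)] := ⟨0, 1, 0, 0⟩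
    let j : ℍ[ℚ, -(p : ℚ), -(q : ℚ)] := ⟨0, 0, 1, 0⟩
    let k : ℍ[ℚ, -(p : ℚ), -(q : ℚ)] := ⟨0, 0, 0, 1⟩
    let O : Submodule ℤ ℍ[ℚ, -(p : ℚ), -(q : ℚ)] :=
      Submodule.span ℤ {1, ((2 : ℚ)⁻¹) • (1 + j), ((2 : ℚ)⁻¹) • (i + k),
        ((q : ℚ)⁻¹) • ((a : ℚ) • j + k)}
    ∀ x ∈ O, star x ∈ O ∧ (∃ n : ℤ, x + star x = (n : ℍ[ℚ, -(p : ℚ), -(q : ℚ)])) ∧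
      (∃ n : ℤ, x * star x = (n : ℍ[ℚ, -(p : ℚ), -(q : ℚ)])) :=
  quaternionAlgebra_order_star_stable_general p q hq8 a ha
end

section
/- The vectors u₁, u₂, u₃, u₄ are linearly independent over K; in particular they form a basis of K⁴. (This is the computation underlying Corollary 4.5: H¹(A, Ω¹_A) of the superspecial abelian surface is generated by the Chern classes of the algebraic cycles E₁, E₂, Δ, Δ_{(1+α)/2}.) -/
/-! The determinant of the matrix with rows `u₁, …, u₄` is the difference of the two middle
entries of `u₄`, that is `s`; and `s ≠ 0` because `s² = -q` with `p ∤ q`. -/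

namespace Matrix

theorem linearIndependent_rows_and_span_eq_top_of_isUnit_det {n K : Type*} [Fintype n]
    [DecidableEq n] [Field K] {A : Matrix n n K} (h : IsUnit A.det) :
    LinearIndependent K A.row ∧ Submodule.span K (Set.range A.row) = ⊤ := by
  have hli : LinearIndependent K A.row :=
    linearIndependent_rows_iff_isUnit.2 ((isUnit_iff_isUnit_det A).2 h)
  exact ⟨hli, hli.span_eq_top_of_card_eq_finrank' (by simp)⟩

theorem det_fin_four_chernClasses {R : Type*} [CommRing R] (a b c : R) :
    !![0, 0, 0, 1; 1, 0, 0, 0; 1, 1, 1, 1; 1, a, b, c].det = a - b := by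
  simp [det_succ_row_zero, Fin.sum_univ_succ, Fin.succAbove]
  ring

end Matrix

theorem two_ne_zero_of_charP_odd {K : Type*} [Field K] {p : ℕ} [CharP K p] (hp : Odd p) :
    (2 : K) ≠ 0 :=
  Ring.two_ne_zero <| by
    rw [ringChar.eq K p]
    rintro rfl
    exact Nat.not_odd_iff_even.2 even_two hp

theorem chernClasses_linearIndependent_general (p : ℕ) (hpodd : Odd p)
    (K : Type*) [Field K] [CharP K p] (q : ℤ) (hq : ¬ (p : ℤ) ∣ q)
    (s : K) (hs : s ^ 2 = -(q : K)) :
    let u : Fin 4 → (Fin 4 → K) :=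
      ![![0, 0, 0, 1], ![1, 0, 0, 0], ![1, 1, 1, 1],
        ![1, (1 + s) / 2, (1 - s) / 2, (1 + (q : K)) / 4]]
    LinearIndependent K u ∧ Submodule.span K (Set.range u) = ⊤ := by
  intro u
  have hs0 : s ≠ 0 := by
    rintro rfl
    exact hq <| (CharP.intCast_eq_zero_iff K p q).1 <| neg_eq_zero.1 <| by simpa using hs.symm
  have hdet : (Matrix.of u).det = s := by
    rw [show Matrix.of u = !![0, 0, 0, 1; 1, 0, 0, 0; 1, 1, 1, 1;
      1, (1 + s) / 2, (1 - s) / 2, (1 + (q : K)) / 4] from rfl, Matrix.det_fin_four_chernClasses]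
    field_simp [two_ne_zero_of_charP_odd (K := K) hpodd]
    ring
  exact Matrix.linearIndependent_rows_and_span_eq_top_of_isUnit_det (hdet.symm ▸ hs0.isUnit)

/-- Let `p` be an odd prime, `K` a field of characteristic `p`, `q` an integer
not divisible by `p`, and `s ∈ K` with `s² = -q`.  The vectors
`u₁ = (0,0,0,1)`, `u₂ = (1,0,0,0)`, `u₃ = (1,1,1,1)`,
`u₄ = (1, (1+s)/2, (1-s)/2, (1+q)/4)` in `K⁴` are linearly independent over `K`;
in particular they form a basis of `K⁴`. -/
theorem chernClasses_linearIndependent (p : ℕ) (hp : p.Prime) (hpodd : Odd p)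
    (K : Type*) [Field K] [CharP K p] (q : ℤ) (hq : ¬ (p : ℤ) ∣ q)
    (s : K) (hs : s ^ 2 = -(q : K)) :
    let u : Fin 4 → (Fin 4 → K) :=
      ![![0, 0, 0, 1], ![1, 0, 0, 0], ![1, 1, 1, 1],
        ![1, (1 + s) / 2, (1 - s) / 2, (1 + (q : K)) / 4]]
    LinearIndependent K u ∧ Submodule.span K (Set.range u) = ⊤ :=
  chernClasses_linearIndependent_general p hpodd K q hq s hs
end

section
/- In K⁴ one has the linear relation u₆ = (2a/q)·u₄ − (a/q)·u₃ + (1 − a/q)·u₂ + (a²/q + a/(2q) − a/2)·u₁, where all fractions are computed in K. -/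
/-- Let `p` be an odd prime, `K` a field of characteristic `p`, `q` an integer
not divisible by `p`, `a` an integer, and `s ∈ K` with `s² = -q`.  With
`u₁ = (0,0,0,1)`, `u₂ = (1,0,0,0)`, `u₃ = (1,1,1,1)`,
`u₄ = (1, (1+s)/2, (1-s)/2, (1+q)/4)`, `u₆ = (1, a·s/q, -a·s/q, a²/q)` in `K⁴`, one has
`u₆ = (2a/q)·u₄ - (a/q)·u₃ + (1 - a/q)·u₂ + (a²/q + a/(2q) - a/2)·u₁`. -/
theorem chernClass_linear_relation (p : ℕ) (hp : p.Prime) (hpodd : Odd p)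
    (K : Type*) [Field K] [CharP K p] (q a : ℤ) (hq : ¬ (p : ℤ) ∣ q)
    (s : K) (hs : s ^ 2 = -(q : K)) :
    let u₁ : Fin 4 → K := ![0, 0, 0, 1]
    let u₂ : Fin 4 → K := ![1, 0, 0, 0]
    let u₃ : Fin 4 → K := ![1, 1, 1, 1]
    let u₄ : Fin 4 → K := ![1, (1 + s) / 2, (1 - s) / 2, (1 + (q : K)) / 4]
    let u₆ : Fin 4 → K := ![1, (a : K) * s / (q : K), -((a : K) * s / (q : K)),
      (a : K) ^ 2 / (q : K)]
    u₆ = (2 * (a : K) / (q : K)) • u₄ - ((a : K) / (q : K)) • u₃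
      + (1 - (a : K) / (q : K)) • u₂
      + ((a : K) ^ 2 / (q : K) + (a : K) / (2 * (q : K)) - (a : K) / 2) • u₁ := by
  intro u₁ u₂ u₃ u₄ u₆
  have hq0 : (q : K) ≠ 0 := by
    simpa using (CharP.intCast_eq_zero_iff K p q).not.mpr hq
  have hp2 : p ≠ 2 := by rintro rfl; simp [Nat.odd_iff] at hpodd
  have h2 : (2 : K) ≠ 0 := by
    intro h
    have hd : p ∣ 2 := (CharP.cast_eq_zero_iff K p 2).mp (by exact_mod_cast h)
    exact hp2 ((Nat.prime_dvd_prime_iff_eq hp Nat.prime_two).mp hd)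
  have h4 : (4 : K) ≠ 0 := by
    have : (4 : K) = 2 * 2 := by norm_num
    rw [this]; exact mul_ne_zero h2 h2
  have h16 : (16 : K) ≠ 0 := by
    have : (16 : K) = 2 ^ 4 := by norm_num
    rw [this]; exact pow_ne_zero _ h2
  funext i
  fin_cases i <;>
    simp [u₁, u₂, u₃, u₄, u₆, Matrix.cons_val_zero, Matrix.cons_val_one] <;>
    field_simp <;> ring_nf <;> simp [mul_assoc, mul_inv_cancel₀ (pow_ne_zero 4 hq0), inv_mul_cancel₀ h16]
end

section
/- The kernel of T is 2-dimensional as an 𝔽_p-vector space: dim_{𝔽_p} ker T = 2. (This is the dimension count of Theorem 4.4: the kernel of the Chern class map c₁ : NS(A)/pNS(A) → H¹(A, Ω¹_A) of the superspecial abelian surface A is 2-dimensional over 𝔽_p.) -/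
/-!
Write `uᵢ` for the images of the basis vectors. Since `u₅ = u₂` and `2q·u₆` is an integer
combination of `u₁, …, u₄`, the kernel contains two independent vectors. Conversely
`u₁, …, u₄` are linearly independent already over `K`, because the middle coordinates of `u₄`
differ by `s ≠ 0`; so `T` has rank at least `4` and its kernel dimension at most `2`.
-/

open Module

theorem LinearMap.finrank_ker_eq_card_of_linearIndependent {R V M : Type*} [DivisionRing R]
    [AddCommGroup V] [Module R V] [FiniteDimensional R V] [AddCommGroup M] [Module R M]
    (f : V →ₗ[R] M) {ι κ : Type*} [Fintype ι] [Fintype κ] {w : κ → V}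
    (hw : LinearIndependent R w) (hfw : ∀ k, f (w k) = 0) {v : ι → V}
    (hv : LinearIndependent R (f ∘ v)) (hcard : Fintype.card κ + Fintype.card ι = finrank R V) :
    finrank R (LinearMap.ker f) = Fintype.card κ := by
  have hker : Fintype.card κ ≤ finrank R (LinearMap.ker f) :=
    LinearIndependent.fintype_card_le_finrank (b := fun k => (⟨w k, hfw k⟩ : LinearMap.ker f))
      (.of_comp (LinearMap.ker f).subtype hw)
  have hrange : Fintype.card ι ≤ finrank R (LinearMap.range f) :=
    LinearIndependent.fintype_card_le_finrank
      (b := fun i => (⟨f (v i), v i, rfl⟩ : LinearMap.range f))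
      (.of_comp (LinearMap.range f).subtype hv)
  have := f.finrank_range_add_finrank_ker
  omega

theorem linearIndependent_fin_four_of_ne {F K : Type*} [Field F] [Field K] [Algebra F K]
    {x y t : K} (hxy : x ≠ y) :
    LinearIndependent F ![![0, 0, 0, 1], ![1, 0, 0, 0], ![1, 1, 1, 1], ![1, x, y, t]] := by
  refine .restrict_scalars' (K := K) F (Fintype.linearIndependent_iff.mpr fun g hg => ?_)
  have e0 := congrFun hg 0
  have e1 := congrFun hg 1
  have e2 := congrFun hg 2
  have e3 := congrFun hg 3
  simp only [Fin.isValue, Finset.sum_apply, Pi.smul_apply, Matrix.cons_val',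
    Matrix.cons_val_zero, Matrix.cons_val_fin_one, smul_eq_mul, Fin.sum_univ_four, mul_zero,
    Matrix.cons_val_one, mul_one, zero_add, Matrix.cons_val, Pi.zero_apply, add_zero]
    at e0 e1 e2 e3
  have h3 : g 3 = 0 := by
    have : g 3 * (x - y) = 0 := by linear_combination e1 - e2
    exact (mul_eq_zero.mp this).resolve_right (sub_ne_zero.mpr hxy)
  have h2 : g 2 = 0 := by linear_combination e1 - x * h3
  have h1 : g 1 = 0 := by linear_combination e0 - h2 - h3
  have h0 : g 0 = 0 := by linear_combination e3 - h2 - t * h3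
  intro i
  fin_cases i <;> assumption

section ChernVectors

variable {F K : Type*} [Field F] [Field K]

def chernVectors (q a : ℤ) (s : K) : Fin 6 → Fin 4 → K :=
  ![![0, 0, 0, 1], ![1, 0, 0, 0], ![1, 1, 1, 1],
    ![1, (1 + s) / 2, (1 - s) / 2, (1 + (q : K)) / 4],
    ![1, 0, 0, 0],
    ![1, (a : K) * s / (q : K), -((a : K) * s / (q : K)), (a : K) ^ 2 / (q : K)]]

/-- Solving `u₆ = α u₁ + β u₂ + γ u₃ + δ u₄` coordinatewise gives `δ = 2a/q`, `γ = -a/q`,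
`β = 1 - a/q`, `α = a(2a + 1 - q)/(2q)`; these are the coefficients of `2q·(u₆ - α u₁ - ⋯)`. -/
def chernKernelCoeffs (q a : ℤ) : Fin 6 → ℤ :=
  ![a * (q - 1 - 2 * a), 2 * (a - q), 2 * a, -4 * a, 0, 2 * q]

theorem sum_chernKernelCoeffs_zsmul_chernVectors {q : ℤ} (a : ℤ) {s : K} (hq : (q : K) ≠ 0)
    (h2 : (2 : K) ≠ 0) : ∑ i, chernKernelCoeffs q a i • chernVectors q a s i = 0 := by
  have h4 : (4 : K) ≠ 0 := by
    rw [show (4 : K) = 2 * 2 by norm_num]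
    exact mul_ne_zero h2 h2
  ext j
  fin_cases j <;>
  · simp only [chernKernelCoeffs, chernVectors, Fin.sum_univ_six, Finset.sum_apply,
      zsmul_eq_mul, Pi.mul_apply, Pi.intCast_apply, Pi.zero_apply, Fin.zero_eta, Fin.mk_one,
      Fin.reduceFinMk, Fin.isValue, Matrix.cons_val', Matrix.cons_val, Matrix.cons_val_zero,
      Matrix.cons_val_one, Matrix.cons_val_fin_one, Int.cast_mul, Int.cast_sub, Int.cast_neg,
      Int.cast_ofNat, Int.cast_one, Int.cast_zero]
    field_simp
    ring

theorem linearIndependent_chernKernelVectors {q : ℤ} (a : ℤ) (hq : (q : F) ≠ 0)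
    (h2 : (2 : F) ≠ 0) :
    LinearIndependent F
      ![Pi.single 4 1 - Pi.single 1 1, ∑ i, chernKernelCoeffs q a i • Pi.single i (1 : F)] := by
  refine LinearIndependent.pair_iff.mpr fun c d hcd => ?_
  simpa [chernKernelCoeffs, Pi.single_apply, h2, hq] using
    And.intro (congrFun hcd 4) (congrFun hcd 5)

theorem linearIndependent_chernVectors_castLE [Algebra F K] (q a : ℤ) {s : K} (hs : s ≠ 0)
    (h2 : (2 : K) ≠ 0) :
    LinearIndependent F fun i : Fin 4 => chernVectors q a s (Fin.castLE (by norm_num) i) := by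
  have hmid : (1 + s) / 2 ≠ (1 - s) / 2 := by
    intro h
    field_simp at h
    have : (2 : K) * s = 0 := by linear_combination h
    exact hs ((mul_eq_zero.mp this).resolve_left h2)
  convert linearIndependent_fin_four_of_ne (F := F) (t := (1 + (q : K)) / 4) hmid using 1
  funext i
  fin_cases i <;> rfl

end ChernVectors

/-- Let `p` be an odd prime, `K` a field of characteristic `p` (with its unique
`ZMod p`-algebra structure, making `K` an `𝔽_p`-vector space), `q` an integer not divisible
by `p`, `a` an integer, and `s ∈ K` with `s² = -q`.  Let `T : (ZMod p)⁶ → K⁴` be the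
`𝔽_p`-linear map sending the `i`-th standard basis vector `eᵢ` to `uᵢ`, where
`u₁ = (0,0,0,1)`, `u₂ = (1,0,0,0)`, `u₃ = (1,1,1,1)`,
`u₄ = (1, (1+s)/2, (1-s)/2, (1+q)/4)`, `u₅ = (1,0,0,0)`, `u₆ = (1, a·s/q, -a·s/q, a²/q)`.
Then `dim_{𝔽_p} ker T = 2`. -/
theorem kernel_chernClassMap_dim_two (p : ℕ) [Fact p.Prime] (hpodd : Odd p)
    (K : Type*) [Field K] [CharP K p] [Algebra (ZMod p) K]
    (q a : ℤ) (hq : ¬ (p : ℤ) ∣ q) (s : K) (hs : s ^ 2 = -(q : K))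
    (T : (Fin 6 → ZMod p) →ₗ[ZMod p] (Fin 4 → K))
    (hT : ∀ n : Fin 6, T (Pi.single n 1) =
      ![![0, 0, 0, 1], ![1, 0, 0, 0], ![1, 1, 1, 1],
        ![1, (1 + s) / 2, (1 - s) / 2, (1 + (q : K)) / 4],
        ![1, 0, 0, 0],
        ![1, (a : K) * s / (q : K), -((a : K) * s / (q : K)), (a : K) ^ 2 / (q : K)]] n) :
    Module.finrank (ZMod p) (LinearMap.ker T) = 2 := by
  replace hT : ∀ n, T (Pi.single n 1) = chernVectors q a s n := hT
  have hp2 : p ≠ 2 := by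
    rintro rfl
    exact Nat.not_odd_iff_even.mpr even_two hpodd
  have h2K : (2 : K) ≠ 0 := Ring.two_ne_zero (by rwa [ringChar.eq K p])
  have h2Z : (2 : ZMod p) ≠ 0 := Ring.two_ne_zero (by rwa [ZMod.ringChar_zmod_n])
  have hqK : (q : K) ≠ 0 := (CharP.intCast_eq_zero_iff K p q).not.mpr hq
  have hqZ : (q : ZMod p) ≠ 0 := (CharP.intCast_eq_zero_iff (ZMod p) p q).not.mpr hq
  have hsK : s ≠ 0 := by
    rintro rfl
    exact hqK (by linear_combination hs)
  refine T.finrank_ker_eq_card_of_linearIndependent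
    (linearIndependent_chernKernelVectors a hqZ h2Z) (Fin.forall_fin_two.mpr ⟨?_, ?_⟩)
    (v := fun i : Fin 4 => Pi.single (Fin.castLE _ i) 1)
    (by simpa only [Function.comp_def, hT] using
      linearIndependent_chernVectors_castLE q a hsK h2K) (by simp)
  · simp [hT, chernVectors]
  · simp only [Matrix.cons_val_one, Matrix.cons_val_fin_one, map_sum, map_zsmul, hT]
    exact sum_chernKernelCoeffs_zsmul_chernVectors a hqK h2K
end

section
/- Set ℓ = a·(2q)⁻¹ in ZMod p. Then the kernel of T is spanned over 𝔽_p by the two vectors e₅ − e₂ and e₆ − 4ℓ·e₄ + 2ℓ·e₃ + (2ℓ−1)·e₂ − (1 − q + 2a)ℓ·e₁. (This is the explicit kernel basis of Theorem 4.4, with corrected coefficients; the two vectors correspond to the divisor classes Δ_{F(1+α)/2} − E₂ and Δ_{(a+F)α/q} − 4ℓΔ_{(1+α)/2} + 2ℓΔ + (2ℓ−1)E₂ − (1−q+2a)ℓE₁ in Ker c₁.) -/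
/-!
The images of `e₂` and `e₅` coincide, and with `ℓ = a/(2q)` every coordinate of the second
combination cancels, so both vectors lie in the kernel. Their coordinates at `e₅, e₆` are
`(1, 0)` and `(0, 1)`, so it remains to see that the images of `e₁, …, e₄` are linearly
independent over `𝔽_p`: the second and third coordinates of `∑ xᵢ uᵢ` differ by `s · x₄`,
and `s ≠ 0` because `s² = -q` with `p ∤ q`; this forces `x₄ = 0`, and then `x₃ = x₂ = x₁ = 0`.
-/

theorem LinearMap.ker_eq_span_pair_of_coord {R ι M : Type*} [CommRing R] [AddCommGroup M]
    [Module R M] (T : (ι → R) →ₗ[R] M) {i j : ι} {v w : ι → R}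
    (hv : T v = 0) (hw : T w = 0) (hvi : v i = 1) (hvj : v j = 0) (hwi : w i = 0)
    (hwj : w j = 1) (hinj : ∀ y, T y = 0 → y i = 0 → y j = 0 → y = 0) :
    LinearMap.ker T = Submodule.span R {v, w} := by
  refine le_antisymm (fun x hx => ?_) (Submodule.span_le.2 <| Set.insert_subset hv <|
    Set.singleton_subset_iff.2 hw)
  have hrest : x - x i • v - x j • w = 0 := by
    refine hinj _ ?_ ?_ ?_ <;> simp_all
  rw [sub_sub, sub_eq_zero] at hrest
  rw [hrest]
  exact Submodule.add_mem _ (Submodule.smul_mem _ _ (Submodule.subset_span (by simp)))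
    (Submodule.smul_mem _ _ (Submodule.subset_span (by simp)))

section

variable (F : Type*) [Field F] {K : Type*} [Field K] [Algebra F K] (q a : ℤ) (s : K)

def chernClassMap : (Fin 6 → F) →ₗ[F] (Fin 4 → K) :=
  Fintype.linearCombination F
    ![![0, 0, 0, 1], ![1, 0, 0, 0], ![1, 1, 1, 1],
      ![1, (1 + s) / 2, (1 - s) / 2, (1 + (q : K)) / 4],
      ![1, 0, 0, 0],
      ![1, (a : K) * s / (q : K), -((a : K) * s / (q : K)), (a : K) ^ 2 / (q : K)]]

variable {F}

theorem chernClassMap_apply (x : Fin 6 → F) :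
    chernClassMap F q a s x =
      ![algebraMap F K (x 1) + algebraMap F K (x 2) + algebraMap F K (x 3)
          + algebraMap F K (x 4) + algebraMap F K (x 5),
        algebraMap F K (x 2) + algebraMap F K (x 3) * ((1 + s) / 2)
          + algebraMap F K (x 5) * (a * s / q),
        algebraMap F K (x 2) + algebraMap F K (x 3) * ((1 - s) / 2)
          - algebraMap F K (x 5) * (a * s / q),
        algebraMap F K (x 0) + algebraMap F K (x 2) + algebraMap F K (x 3) * ((1 + q) / 4)
          + algebraMap F K (x 5) * (a ^ 2 / q)] := by
  ext j
  fin_cases j <;>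
    simp [chernClassMap, Fintype.linearCombination_apply, Fin.sum_univ_six, Algebra.smul_def,
      mul_comm, sub_eq_add_neg]

theorem chernClassMap_single_four_sub_single_one :
    chernClassMap F q a s (Pi.single 4 1 - Pi.single 1 1) = 0 := by
  ext j
  fin_cases j <;> simp [chernClassMap]

theorem chernClassMap_single_five_sub_ellCombination (h2 : (2 : K) ≠ 0) :
    let ℓ : F := (a : F) * (2 * (q : F))⁻¹
    chernClassMap F q a s (Pi.single 5 1 - (4 * ℓ) • Pi.single 3 1 + (2 * ℓ) • Pi.single 2 1
      + (2 * ℓ - 1) • Pi.single 1 1 - ((1 - (q : F) + 2 * (a : F)) * ℓ) • Pi.single 0 1) = 0 := by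
  intro ℓ
  have h4 : (4 : K) ≠ 0 := by
    rw [show (4 : K) = 2 * 2 by norm_num]; exact mul_ne_zero h2 h2
  rw [chernClassMap_apply]
  ext j
  fin_cases j <;> simp [ℓ, map_ofNat] <;> field_simp <;> ring

variable {s}

theorem eq_zero_of_chernClassMap_eq_zero (h2 : (2 : K) ≠ 0) (hs : s ≠ 0) {x : Fin 6 → F}
    (hx : chernClassMap F q a s x = 0) (hx4 : x 4 = 0) (hx5 : x 5 = 0) : x = 0 := by
  have h := (chernClassMap_apply q a s x).symm.trans hx
  simp only [hx4, hx5, map_zero, add_zero, zero_mul, sub_zero] at h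
  have e0 := congrFun h 0; have e1 := congrFun h 1; have e2 := congrFun h 2
  have e3 := congrFun h 3
  simp only [Fin.isValue, Matrix.cons_val_zero, Matrix.cons_val_one, Matrix.cons_val,
    Pi.zero_apply] at e0 e1 e2 e3
  have h3 : x 3 = 0 := by
    have : algebraMap F K (x 3) * s * 2 = 0 := by
      field_simp at e1 e2
      linear_combination e1 - e2
    simpa [hs, h2] using this
  have h2' : x 2 = 0 := by simpa [h3] using e1
  have h1 : x 1 = 0 := by simpa [h2', h3] using e0
  have h0 : x 0 = 0 := by simpa [h2', h3] using e3
  ext n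
  fin_cases n <;> assumption

end

/-- In the setting of the previous statement, set `ℓ = a·(2q)⁻¹` in `ZMod p`.
Then the kernel of `T` is spanned over `𝔽_p` by the two vectors
`e₅ - e₂` and `e₆ - 4ℓ·e₄ + 2ℓ·e₃ + (2ℓ-1)·e₂ - (1-q+2a)ℓ·e₁`
(standard basis vectors `e₁, …, e₆` of `(ZMod p)⁶`). -/
theorem kernel_chernClassMap_basis (p : ℕ) [Fact p.Prime] (hpodd : Odd p)
    (K : Type*) [Field K] [CharP K p] [Algebra (ZMod p) K]
    (q a : ℤ) (hq : ¬ (p : ℤ) ∣ q) (s : K) (hs : s ^ 2 = -(q : K))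
    (T : (Fin 6 → ZMod p) →ₗ[ZMod p] (Fin 4 → K))
    (hT : ∀ n : Fin 6, T (Pi.single n 1) =
      ![![0, 0, 0, 1], ![1, 0, 0, 0], ![1, 1, 1, 1],
        ![1, (1 + s) / 2, (1 - s) / 2, (1 + (q : K)) / 4],
        ![1, 0, 0, 0],
        ![1, (a : K) * s / (q : K), -((a : K) * s / (q : K)), (a : K) ^ 2 / (q : K)]] n) :
    let ℓ : ZMod p := (a : ZMod p) * (2 * (q : ZMod p))⁻¹
    let e : Fin 6 → (Fin 6 → ZMod p) := fun n => Pi.single n 1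
    LinearMap.ker T = Submodule.span (ZMod p)
      {e 4 - e 1,
       e 5 - (4 * ℓ) • e 3 + (2 * ℓ) • e 2 + (2 * ℓ - 1) • e 1
         - ((1 - (q : ZMod p) + 2 * (a : ZMod p)) * ℓ) • e 0} := by
  intro ℓ e
  have hp2 : p ≠ 2 := by rintro rfl; exact absurd hpodd (by decide)
  have h2 : (2 : K) ≠ 0 := Ring.two_ne_zero (ringChar.eq K p ▸ hp2)
  have hqK : (q : K) ≠ 0 := (CharP.intCast_eq_zero_iff K p q).not.mpr hq
  have hs0 : s ≠ 0 := by
    rintro rfl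
    exact hqK (neg_eq_zero.mp (by simpa using hs.symm))
  obtain rfl : T = chernClassMap (ZMod p) q a s :=
    (Pi.basisFun (ZMod p) (Fin 6)).ext fun n => by
      rw [Pi.basisFun_apply, hT, chernClassMap, Fintype.linearCombination_apply_single, one_smul]
  exact LinearMap.ker_eq_span_pair_of_coord _ (chernClassMap_single_four_sub_single_one q a s)
    (chernClassMap_single_five_sub_ellCombination q a s h2) (by simp [e]) (by simp [e]) (by simp [e])
    (by simp [e]) fun y hy => eq_zero_of_chernClassMap_eq_zero q a h2 hs0 hy
end
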